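/- Let α ≥ 5 be an integer, let G be a finite simple graph, and let uv be an edge of G with d_G(u) + d_G(v) ≤ α and d_G(u) ≥ 2, d_G(v) ≥ 2. Suppose the graph G' = G − uv admits an edge partition into spanning subgraphs F₁', F₂', H' such that F₁' and F₂' are forests with d_{F_i'}(w) ≤ max{2, ⌈(d_{G'}(w) − α + 6)/2⌉} for every vertex w and each i ∈ {1,2}, and H' has maximum degree at most α − 5. Then G admits an edge partition into spanning subgraphs F₁, F₂, H such that F₁ and F₂ are forests with d_{F_i}(w) ≤ max{2, ⌈(d_G(w) − α + 6)/2⌉} for every vertex w and each i ∈ {1,2}, and H has maximum degree at most α − 5. -/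

import Mathlib

/-!
Put the edge `uv` back into one of the three parts. If `H'` has degree at most `α - 6` at both
`u` and `v`, it can take `uv`. Otherwise, say `d_{H'}(u) ≥ α - 5`; since
`d_{G'}(u) + d_{G'}(v) ≤ α - 2`, the two forests together have at most `3` edges at `u` and `v`,
so one of them has at most one. Adding `uv` to that forest attaches a pendant edge at an isolated
vertex, which creates no cycle, and raises the degrees at `u`, `v` to at most `2`.
-/

/-- `F₁`, `F₂`, `H` form an edge partition of `G` into three spanning subgraphs:
their edge sets are pairwise disjoint and their union is the edge set of `G`. -/
def EdgePartition3 {V : Type*} (G F₁ F₂ H : SimpleGraph V) : Prop :=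
  F₁.edgeSet ∪ F₂.edgeSet ∪ H.edgeSet = G.edgeSet ∧
  Disjoint F₁.edgeSet F₂.edgeSet ∧
  Disjoint F₁.edgeSet H.edgeSet ∧
  Disjoint F₂.edgeSet H.edgeSet

open SimpleGraph

section

variable {V : Type*}

namespace SimpleGraph

variable {F G : SimpleGraph V} {u v w : V}

lemma deleteEdges_sup_edge (h : G.Adj u v) : G.deleteEdges {s(u, v)} ⊔ edge u v = G :=
  sdiff_sup_cancel ((edge_le_iff _).2 (Or.inr h))

lemma neighborSet_sup_edge_of_ne (hu : w ≠ u) (hv : w ≠ v) :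
    (F ⊔ edge u v).neighborSet w = F.neighborSet w := by
  ext x
  simp [edge_adj, hu, hv]

lemma neighborSet_sup_edge_left (huv : u ≠ v) :
    (F ⊔ edge u v).neighborSet u = insert v (F.neighborSet u) := by
  ext x
  simp only [mem_neighborSet, sup_adj, edge_adj, Set.mem_insert_iff]
  grind

lemma ncard_neighborSet_sup_edge_left [Finite V] (huv : u ≠ v) (h : ¬F.Adj u v) :
    ((F ⊔ edge u v).neighborSet u).ncard = (F.neighborSet u).ncard + 1 := by
  rw [neighborSet_sup_edge_left huv, Set.ncard_insert_of_notMem (s := F.neighborSet u) h]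

lemma ncard_neighborSet_sup_edge_le [Finite V] (b : V → ℤ) (huv : u ≠ v)
    (hF : ∀ w, ((F.neighborSet w).ncard : ℤ) ≤ b w)
    (hu : ((F.neighborSet u).ncard : ℤ) + 1 ≤ b u) (hv : ((F.neighborSet v).ncard : ℤ) + 1 ≤ b v)
    (w : V) : (((F ⊔ edge u v).neighborSet w).ncard : ℤ) ≤ b w := by
  have hle : ∀ {x y : V}, x ≠ y →
      (((F ⊔ edge x y).neighborSet x).ncard : ℤ) ≤ (F.neighborSet x).ncard + 1 := fun hxy => by
    rw [neighborSet_sup_edge_left hxy]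
    exact_mod_cast Set.ncard_insert_le _ _
  obtain rfl | hwu := eq_or_ne w u
  · exact (hle huv).trans hu
  obtain rfl | hwv := eq_or_ne w v
  · rw [edge_comm]
    exact (hle huv.symm).trans hv
  rw [neighborSet_sup_edge_of_ne hwu hwv]
  exact hF w

lemma not_reachable_of_neighborSet_eq_empty (hu : F.neighborSet u = ∅) (huv : u ≠ v) :
    ¬F.Reachable u v := fun ⟨p⟩ =>
  (Set.eq_empty_iff_forall_notMem.1 hu) _ (p.adj_snd (Walk.not_nil_of_ne huv))

lemma IsAcyclic.sup_edge_of_neighborSet_eq_empty (hF : F.IsAcyclic) (hu : F.neighborSet u = ∅) :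
    (F ⊔ edge u v).IsAcyclic := by
  obtain rfl | huv := eq_or_ne u v
  · rwa [sup_edge_self]
  exact hF.sup_edge_of_not_reachable (not_reachable_of_neighborSet_eq_empty hu huv)

lemma IsAcyclic.sup_edge_of_ncard_add_ncard_le_one [Finite V] (hF : F.IsAcyclic)
    (h : (F.neighborSet u).ncard + (F.neighborSet v).ncard ≤ 1) : (F ⊔ edge u v).IsAcyclic := by
  obtain hu | hv : (F.neighborSet u).ncard = 0 ∨ (F.neighborSet v).ncard = 0 := by omega
  · exact hF.sup_edge_of_neighborSet_eq_empty ((Set.ncard_eq_zero).1 hu)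
  · rw [edge_comm]
    exact hF.sup_edge_of_neighborSet_eq_empty ((Set.ncard_eq_zero).1 hv)

end SimpleGraph

namespace EdgePartition3

variable {G F₁ F₂ H : SimpleGraph V} {u v : V}

lemma swap₁₂ (h : EdgePartition3 G F₁ F₂ H) : EdgePartition3 G F₂ F₁ H :=
  ⟨by rw [← h.1, Set.union_comm F₂.edgeSet], h.2.1.symm, h.2.2.2, h.2.2.1⟩

lemma swap₁₃ (h : EdgePartition3 G F₁ F₂ H) : EdgePartition3 G H F₂ F₁ :=
  ⟨by rw [← h.1]; ac_rfl,
    h.2.2.2.symm, h.2.2.1.symm, h.2.1.symm⟩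

lemma right_le (h : EdgePartition3 G F₁ F₂ H) : H ≤ G :=
  edgeSet_subset_edgeSet.1 (h.1 ▸ Set.subset_union_right)

lemma sup_edge_right (h : EdgePartition3 G F₁ F₂ H) (hG : ¬G.Adj u v) :
    EdgePartition3 (G ⊔ edge u v) F₁ F₂ (H ⊔ edge u v) := by
  have hF (F : SimpleGraph V) (hFG : F ≤ G) : Disjoint F.edgeSet (edge u v).edgeSet :=
    disjoint_edgeSet.2 ((disjoint_edge _).2 fun hF => hG (hFG hF))
  refine ⟨?_, h.2.1, ?_, ?_⟩
  · rw [edgeSet_sup, edgeSet_sup, ← h.1, ← Set.union_assoc]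
  · rw [edgeSet_sup]
    exact Set.disjoint_union_right.2 ⟨h.2.2.1, hF F₁ h.swap₁₃.right_le⟩
  · rw [edgeSet_sup]
    exact Set.disjoint_union_right.2 ⟨h.2.2.2, hF F₂ h.swap₁₂.swap₁₃.right_le⟩

lemma sup_edge_left (h : EdgePartition3 G F₁ F₂ H) (hG : ¬G.Adj u v) :
    EdgePartition3 (G ⊔ edge u v) (F₁ ⊔ edge u v) F₂ H :=
  (h.swap₁₃.sup_edge_right hG).swap₁₃

lemma sup_edge_middle (h : EdgePartition3 G F₁ F₂ H) (hG : ¬G.Adj u v) :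
    EdgePartition3 (G ⊔ edge u v) F₁ (F₂ ⊔ edge u v) H :=
  (h.swap₁₂.sup_edge_left hG).swap₁₂

lemma ncard_neighborSet [Finite V] (h : EdgePartition3 G F₁ F₂ H) (w : V) :
    (G.neighborSet w).ncard =
      (F₁.neighborSet w).ncard + (F₂.neighborSet w).ncard + (H.neighborSet w).ncard := by
  have hN (F : SimpleGraph V) : F.neighborSet w = (fun x => s(w, x)) ⁻¹' F.edgeSet := rfl
  simp only [hN, ← h.1, Set.preimage_union]
  rw [Set.ncard_union_eq, Set.ncard_union_eq]
  · exact h.2.1.preimage _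
  · exact Set.disjoint_union_left.2 ⟨h.2.2.1.preimage _, h.2.2.2.preimage _⟩

end EdgePartition3

def ForestDegreeBounded (α : ℕ) (G F : SimpleGraph V) : Prop :=
  ∀ w, ((F.neighborSet w).ncard : ℤ) ≤ max 2 ⌈(((G.neighborSet w).ncard : ℚ) - α + 6) / 2⌉

namespace ForestDegreeBounded

variable [Finite V] {α : ℕ} {G G' F : SimpleGraph V} {u v : V}

lemma mono (h : ForestDegreeBounded α G' F) (hle : G' ≤ G) : ForestDegreeBounded α G F := by
  intro w
  refine (h w).trans (max_le_max le_rfl (Int.ceil_mono ?_))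
  have : ((G'.neighborSet w).ncard : ℚ) ≤ (G.neighborSet w).ncard := by
    exact_mod_cast Set.ncard_le_ncard fun x hx => hle hx
  linarith

lemma sup_edge (h : ForestDegreeBounded α G' F) (hle : G' ≤ G) (huv : u ≠ v)
    (hF : (F.neighborSet u).ncard + (F.neighborSet v).ncard ≤ 1) :
    ForestDegreeBounded α G (F ⊔ edge u v) := by
  have hpendant (x : V) (hx : (F.neighborSet x).ncard ≤ 1) :
      ((F.neighborSet x).ncard : ℤ) + 1 ≤ max 2 ⌈(((G.neighborSet x).ncard : ℚ) - α + 6) / 2⌉ :=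
    le_max_of_le_left (by omega)
  exact ncard_neighborSet_sup_edge_le _ huv (h.mono hle) (hpendant u (by omega))
    (hpendant v (by omega))

end ForestDegreeBounded

end

theorem statement6_general {V : Type*} [Fintype V] (α : ℕ)
    (G : SimpleGraph V) (u v : V) (huv : G.Adj u v)
    (hsum : (G.neighborSet u).ncard + (G.neighborSet v).ncard ≤ α)
    (G' : SimpleGraph V) (hG' : G' = G.deleteEdges {s(u, v)})
    (F₁' F₂' H' : SimpleGraph V)
    (hpart' : EdgePartition3 G' F₁' F₂' H')
    (hF₁' : F₁'.IsAcyclic) (hF₂' : F₂'.IsAcyclic)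
    (hd₁' : ∀ w, ((F₁'.neighborSet w).ncard : ℤ) ≤
      max 2 ⌈(((G'.neighborSet w).ncard : ℚ) - α + 6) / 2⌉)
    (hd₂' : ∀ w, ((F₂'.neighborSet w).ncard : ℤ) ≤
      max 2 ⌈(((G'.neighborSet w).ncard : ℚ) - α + 6) / 2⌉)
    (hH' : ∀ w, (H'.neighborSet w).ncard ≤ α - 5) :
    ∃ F₁ F₂ H : SimpleGraph V,
      EdgePartition3 G F₁ F₂ H ∧
      F₁.IsAcyclic ∧ F₂.IsAcyclic ∧
      (∀ w, ((F₁.neighborSet w).ncard : ℤ) ≤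
        max 2 ⌈(((G.neighborSet w).ncard : ℚ) - α + 6) / 2⌉) ∧
      (∀ w, ((F₂.neighborSet w).ncard : ℤ) ≤
        max 2 ⌈(((G.neighborSet w).ncard : ℚ) - α + 6) / 2⌉) ∧
      (∀ w, (H.neighborSet w).ncard ≤ α - 5) := by
  have hne : u ≠ v := huv.ne
  have hG'uv : ¬G'.Adj u v := by simp [hG']
  have hG : G' ⊔ edge u v = G := hG' ▸ deleteEdges_sup_edge huv
  have hle : G' ≤ G' ⊔ edge u v := le_sup_left
  have hdegu := ncard_neighborSet_sup_edge_left hne hG'uv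
  have hdegv := ncard_neighborSet_sup_edge_left hne.symm (hG'uv ∘ G'.adj_symm)
  rw [edge_comm] at hdegv
  rw [← hG] at hsum ⊢
  have hu := hpart'.ncard_neighborSet u
  have hv := hpart'.ncard_neighborSet v
  by_cases hH : (H'.neighborSet u).ncard + 6 ≤ α ∧ (H'.neighborSet v).ncard + 6 ≤ α
  · refine ⟨F₁', F₂', H' ⊔ edge u v, hpart'.sup_edge_right hG'uv, hF₁', hF₂',
      ForestDegreeBounded.mono hd₁' hle, ForestDegreeBounded.mono hd₂' hle, fun w => ?_⟩
    have := ncard_neighborSet_sup_edge_le (fun _ => ((α - 5 : ℕ) : ℤ)) hne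
      (fun w => by exact_mod_cast hH' w) (by omega) (by omega) w
    exact_mod_cast this
  -- `H'` is full at `u` or `v`, so the forests have at most three edges at `u` and `v`.
  obtain h₁ | h₂ : (F₁'.neighborSet u).ncard + (F₁'.neighborSet v).ncard ≤ 1 ∨
      (F₂'.neighborSet u).ncard + (F₂'.neighborSet v).ncard ≤ 1 := by omega
  · exact ⟨F₁' ⊔ edge u v, F₂', H', hpart'.sup_edge_left hG'uv,
      hF₁'.sup_edge_of_ncard_add_ncard_le_one h₁, hF₂', ForestDegreeBounded.sup_edge hd₁' hle hne h₁,
      ForestDegreeBounded.mono hd₂' hle, hH'⟩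
  · exact ⟨F₁', F₂' ⊔ edge u v, H', hpart'.sup_edge_middle hG'uv,
      hF₁', hF₂'.sup_edge_of_ncard_add_ncard_le_one h₂, ForestDegreeBounded.mono hd₁' hle,
      ForestDegreeBounded.sup_edge hd₂' hle hne h₂, hH'⟩

/-- Let `α ≥ 5`, let `G` be a finite simple graph, and let `uv` be an
edge of `G` with `d_G(u) + d_G(v) ≤ α`, `d_G(u) ≥ 2` and `d_G(v) ≥ 2`.  If
`G' = G - uv` (obtained by deleting the edge `uv`) has an edge partition into forests
`F₁'`, `F₂'` with `d_{Fᵢ'}(w) ≤ max {2, ⌈(d_{G'}(w) - α + 6)/2⌉}` for all `w`, and a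
subgraph `H'` with `Δ(H') ≤ α - 5`, then `G` has an edge partition into forests
`F₁`, `F₂` with `d_{Fᵢ}(w) ≤ max {2, ⌈(d_G(w) - α + 6)/2⌉}` for all `w`, and a
subgraph `H` with `Δ(H) ≤ α - 5`. -/
theorem statement6 {V : Type*} [Fintype V] (α : ℕ) (hα : 5 ≤ α)
    (G : SimpleGraph V) (u v : V) (huv : G.Adj u v)
    (hsum : (G.neighborSet u).ncard + (G.neighborSet v).ncard ≤ α)
    (hdu : 2 ≤ (G.neighborSet u).ncard) (hdv : 2 ≤ (G.neighborSet v).ncard)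
    (G' : SimpleGraph V) (hG' : G' = G.deleteEdges {s(u, v)})
    (F₁' F₂' H' : SimpleGraph V)
    (hpart' : EdgePartition3 G' F₁' F₂' H')
    (hF₁' : F₁'.IsAcyclic) (hF₂' : F₂'.IsAcyclic)
    (hd₁' : ∀ w, ((F₁'.neighborSet w).ncard : ℤ) ≤
      max 2 ⌈(((G'.neighborSet w).ncard : ℚ) - α + 6) / 2⌉)
    (hd₂' : ∀ w, ((F₂'.neighborSet w).ncard : ℤ) ≤
      max 2 ⌈(((G'.neighborSet w).ncard : ℚ) - α + 6) / 2⌉)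
    (hH' : ∀ w, (H'.neighborSet w).ncard ≤ α - 5) :
    ∃ F₁ F₂ H : SimpleGraph V,
      EdgePartition3 G F₁ F₂ H ∧
      F₁.IsAcyclic ∧ F₂.IsAcyclic ∧
      (∀ w, ((F₁.neighborSet w).ncard : ℤ) ≤
        max 2 ⌈(((G.neighborSet w).ncard : ℚ) - α + 6) / 2⌉) ∧
      (∀ w, ((F₂.neighborSet w).ncard : ℤ) ≤
        max 2 ⌈(((G.neighborSet w).ncard : ℚ) - α + 6) / 2⌉) ∧
      (∀ w, (H.neighborSet w).ncard ≤ α - 5) :=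
  statement6_general α G u v huv hsum G' hG' F₁' F₂' H' hpart' hF₁' hF₂' hd₁' hd₂' hH'
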